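/- arXiv:2101.11202 — 2 statements merged into one kernel-verified Lean document; each statement's English description precedes it below -/
import Mathlib

section
/- (Proposition 3, strong law for tail segments.) Fix a segmentation R and rates μ ∈ Θ(R), fix w ∈ (0,1] and c > 0, and let g : ℕ → ℕ be a sequence with g(n) ≤ n for all n and g(n) > c·n^w for all sufficiently large n. Then almost surely (1/g(n))·Σ_{t=n−g(n)+1}^{n} l((R,μ); X_t) → L(R,μ) as n → ∞, and likewise (1/g(n))·Σ_{t=n−g(n)+1}^{n} ∇_μ l((R,μ); X_t) → ∇_μ L(R,μ) almost surely. -/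
open MeasureTheory ProbabilityTheory Filter Topology

/-- The reduced Poisson log-likelihood of a count array `x` under segmentation `R`
and rates `μ`: `l((R,μ); x) = Σ_w Σ_i (x(i,w)·log μ(R i, w) − μ(R i, w))`. -/
noncomputable def loglik {NI NW m : ℕ} (R : Fin NI → Fin m)
    (μ : Fin m × Fin NW → ℝ) (x : Fin NI × Fin NW → ℕ) : ℝ :=
  ∑ w : Fin NW, ∑ i : Fin NI, ((x (i, w) : ℝ) * Real.log (μ (R i, w)) - μ (R i, w))

/-- Gradient of `l((R,μ); x)` in `μ`: its `(h,w)` entry is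
`Σ_{i : R i = h} (x(i,w)/μ(h,w) − 1)`. -/
noncomputable def loglikGrad {NI NW m : ℕ} (R : Fin NI → Fin m)
    (μ : Fin m × Fin NW → ℝ) (x : Fin NI × Fin NW → ℕ) :
    Fin m × Fin NW → ℝ :=
  fun hw => ∑ i : Fin NI,
    if R i = hw.1 then ((x (i, hw.2) : ℝ) / μ hw - 1) else 0

/-- Diagonal of the Hessian of `l((R,μ); x)` in `μ`: its `(h,w)` entry is
`−Σ_{i : R i = h} x(i,w)/μ(h,w)²`. -/
noncomputable def loglikHess {NI NW m : ℕ} (R : Fin NI → Fin m)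
    (μ : Fin m × Fin NW → ℝ) (x : Fin NI × Fin NW → ℕ) :
    Fin m × Fin NW → ℝ :=
  fun hw => -∑ i : Fin NI,
    if R i = hw.1 then (x (i, hw.2) : ℝ) / (μ hw) ^ 2 else 0

/-- The expected log-likelihood `L(R,μ)` when the true per-pixel rates are
`λ°(i,w) = μ°(R° i, w)`. -/
noncomputable def expLoglik {NI NW m0 m : ℕ} (R0 : Fin NI → Fin m0)
    (μ0 : Fin m0 × Fin NW → ℝ) (R : Fin NI → Fin m) (μ : Fin m × Fin NW → ℝ) : ℝ :=
  ∑ w : Fin NW, ∑ i : Fin NI, (μ0 (R0 i, w) * Real.log (μ (R i, w)) - μ (R i, w))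

/-- Gradient of `L(R,μ)` in `μ`. -/
noncomputable def expLoglikGrad {NI NW m0 m : ℕ} (R0 : Fin NI → Fin m0)
    (μ0 : Fin m0 × Fin NW → ℝ) (R : Fin NI → Fin m) (μ : Fin m × Fin NW → ℝ) :
    Fin m × Fin NW → ℝ :=
  fun hw => ∑ i : Fin NI,
    if R i = hw.1 then (μ0 (R0 i, hw.2) / μ hw - 1) else 0

/-- Diagonal of the Hessian of `L(R,μ)` in `μ`. -/
noncomputable def expLoglikHess {NI NW m0 m : ℕ} (R0 : Fin NI → Fin m0)
    (μ0 : Fin m0 × Fin NW → ℝ) (R : Fin NI → Fin m) (μ : Fin m × Fin NW → ℝ) :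
    Fin m × Fin NW → ℝ :=
  fun hw => -∑ i : Fin NI,
    if R i = hw.1 then μ0 (R0 i, hw.2) / (μ hw) ^ 2 else 0

/-- The compact parameter box `Θ(R) = [C_d, C_u]^(Fin m × Fin N_W)`. -/
def Theta (Cd Cu : ℝ) (m NW : ℕ) : Set (Fin m × Fin NW → ℝ) :=
  {μ | ∀ p, μ p ∈ Set.Icc Cd Cu}

/-! Both `l((R,μ); x)` and every coordinate of `∇_μ l((R,μ); x)` are affine functionals
`Σ_p (a_p x_p + b_p)` of the count array, so it suffices to prove the strong law for tail-segment
averages of such functionals of an i.i.d. Poisson array. Poisson counts have exponential moments of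
all orders, and the cumulant generating function of the row sum has slope equal to its mean at the
origin, so the Chernoff bound gives `P(segment average ≥ mean + ε) ≤ exp(-β g(n))` for some
`β > 0`. Since `g(n) > c n^w`, these bounds are summable in `n`, and the first Borel–Cantelli
lemma gives almost sure convergence; no independence between different segments is needed. -/

open Real Finset
open scoped NNReal

lemma summable_exp_neg_mul_rpow {d w : ℝ} (hd : 0 < d) (hw : 0 < w) :
    Summable fun n : ℕ => exp (-(d * (n : ℝ) ^ w)) := by
  have hlim : Tendsto (fun n : ℕ => ((n : ℝ) ^ w) ^ (2 / w) * exp (-d * (n : ℝ) ^ w))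
      atTop (𝓝 0) :=
    (tendsto_rpow_mul_exp_neg_mul_atTop_nhds_zero (2 / w) d hd).comp
      ((tendsto_rpow_atTop hw).comp tendsto_natCast_atTop_atTop)
  refine summable_of_isBigO_nat (Real.summable_nat_pow_inv.2 one_lt_two) ?_
  refine Asymptotics.IsBigO.of_bound 1 ?_
  filter_upwards [hlim.eventually (gt_mem_nhds one_pos), eventually_gt_atTop 0] with n hn hn0
  have hpow : ((n : ℝ) ^ w) ^ (2 / w) = (n : ℝ) ^ 2 := by
    rw [← Real.rpow_mul (Nat.cast_nonneg n), mul_div_cancel₀ _ hw.ne', Real.rpow_two]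
  rw [hpow, neg_mul] at hn
  have hn2 : (0 : ℝ) < (n : ℝ) ^ 2 := by positivity
  rw [Real.norm_of_nonneg (exp_pos _).le, Real.norm_of_nonneg (inv_pos.2 hn2).le, one_mul,
    ← one_div, le_div_iff₀ hn2, mul_comm]
  exact hn.le

lemma summable_exp_neg_mul_of_rpow_lt {g : ℕ → ℕ} {c w : ℝ} (hc : 0 < c) (hw : 0 < w)
    (hg : ∀ᶠ n : ℕ in atTop, c * (n : ℝ) ^ w < g n) {β : ℝ} (hβ : 0 < β) :
    Summable fun n => exp (-(β * (g n : ℝ))) := by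
  refine summable_of_isBigO_nat (summable_exp_neg_mul_rpow (mul_pos hβ hc) hw)
    (Asymptotics.IsBigO.of_bound 1 ?_)
  filter_upwards [hg] with n hn
  rw [Real.norm_of_nonneg (exp_pos _).le, Real.norm_of_nonneg (exp_pos _).le, one_mul,
    exp_le_exp, neg_le_neg_iff, mul_assoc]
  exact mul_le_mul_of_nonneg_left hn.le hβ.le

lemma ae_eventually_notMem_of_measureReal_le {α : Type*} [MeasurableSpace α] {μ : Measure α}
    [IsFiniteMeasure μ] {s : ℕ → Set α} {u : ℕ → ℝ} (hsu : ∀ n, μ.real (s n) ≤ u n)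
    (hu : Summable u) : ∀ᵐ x ∂μ, ∀ᶠ n in atTop, x ∉ s n := by
  have hu0 : ∀ n, 0 ≤ u n := fun n => measureReal_nonneg.trans (hsu n)
  refine ae_eventually_notMem (ne_top_of_le_ne_top (ENNReal.ofReal_ne_top (r := ∑' n, u n)) ?_)
  rw [ENNReal.ofReal_tsum_of_nonneg hu0 hu]
  exact ENNReal.tsum_le_tsum fun n => by
    rw [← ofReal_measureReal (measure_ne_top μ (s n))]
    exact ENNReal.ofReal_le_ofReal (hsu n)

lemma ae_tendsto_of_forall_ae_eventually_dist_lt {α β E : Type*} [MeasurableSpace α]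
    {μ : Measure α} [PseudoMetricSpace E] {l : Filter β} {f : β → α → E} {c : E}
    (h : ∀ ε > 0, ∀ᵐ x ∂μ, ∀ᶠ n in l, dist (f n x) c < ε) :
    ∀ᵐ x ∂μ, Tendsto (fun n => f n x) l (𝓝 c) := by
  have hk := ae_all_iff.2 fun k : ℕ => h (1 / (k + 1)) Nat.one_div_pos_of_nat
  filter_upwards [hk] with x hx
  refine Metric.tendsto_nhds.2 fun ε hε => ?_
  obtain ⟨k, hk⟩ := exists_nat_one_div_lt hε
  exact (hx k).mono fun n hn => hn.trans hk

section Chernoff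

variable {Ω ι : Type*} [MeasurableSpace Ω] {μ : Measure Ω} [IsProbabilityMeasure μ]

lemma hasDerivAt_cgf_zero {X : Ω → ℝ} (hX : ∀ s, Integrable (fun ω => exp (s * X ω)) μ) :
    HasDerivAt (cgf X μ) μ[X] 0 := by
  have h0 : (0 : ℝ) ∈ interior (integrableExpSet X μ) := by
    simp [show integrableExpSet X μ = Set.univ from Set.eq_univ_of_forall hX]
  simpa [deriv_cgf_zero h0] using (analyticAt_cgf h0).differentiableAt.hasDerivAt

lemma exists_pos_sum_cgf_lt [Fintype ι] {X : ι → Ω → ℝ}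
    (hX : ∀ i s, Integrable (fun ω => exp (s * X i ω)) μ) {ε : ℝ} (hε : 0 < ε) :
    ∃ s > 0, ∑ i, cgf (X i) μ s < s * (∑ i, μ[X i] + ε) := by
  set φ : ℝ → ℝ := fun s => ∑ i, cgf (X i) μ s - s * (∑ i, μ[X i] + ε)
  have hφ : HasDerivAt φ (-ε) 0 := by
    refine ((HasDerivAt.fun_sum (u := univ) fun i _ => hasDerivAt_cgf_zero (hX i)).sub
      ((hasDerivAt_id (0 : ℝ)).mul_const (∑ i, μ[X i] + ε))).congr_deriv ?_
    ring
  have hslope : ∀ᶠ s in 𝓝[>] 0, s⁻¹ • (φ (0 + s) - φ 0) < 0 :=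
    hφ.tendsto_slope_zero_right.eventually (gt_mem_nhds (neg_neg_of_pos hε))
  obtain ⟨s, hs, hs0⟩ := (hslope.and self_mem_nhdsWithin).exists
  refine ⟨s, hs0, ?_⟩
  have hφs : φ s < 0 := by
    simpa [φ, cgf_zero, smul_eq_mul, inv_mul_lt_iff₀ hs0] using hs
  exact sub_neg.1 hφs

lemma exists_measureReal_sum_ge_le_exp [Fintype ι] {Y : ℕ × ι → Ω → ℝ}
    (hmeas : ∀ q, Measurable (Y q)) (hindep : iIndepFun Y μ)
    (hident : ∀ t i, IdentDistrib (Y (t, i)) (Y (0, i)) μ μ)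
    (hexp : ∀ i s, Integrable (fun ω => exp (s * Y (0, i) ω)) μ) {ε : ℝ} (hε : 0 < ε) :
    ∃ β > 0, ∀ G : Finset ℕ, μ.real {ω | (∑ i, μ[Y (0, i)] + ε) * #G ≤
      ∑ t ∈ G, ∑ i, Y (t, i) ω} ≤ exp (-(β * #G)) := by
  obtain ⟨s, hs0, hs⟩ := exists_pos_sum_cgf_lt (X := fun i => Y (0, i)) hexp hε
  refine ⟨s * (∑ i, μ[Y (0, i)] + ε) - ∑ i, cgf (Y (0, i)) μ s, sub_pos.2 hs, fun G => ?_⟩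
  have hint : ∀ q, Integrable (fun ω => exp (s * Y q ω)) μ := fun ⟨t, i⟩ =>
    ((hident t i).comp (measurable_const_mul s).exp).integrable_iff.2 (hexp i s)
  have hcgf : ∀ t i, cgf (Y (t, i)) μ s = cgf (Y (0, i)) μ s := fun t i => by
    simp only [cgf, mgf_congr_of_identDistrib _ _ (hident t i)]
  have hsum : ∀ ω, ∑ t ∈ G, ∑ i, Y (t, i) ω = (∑ q ∈ G ×ˢ univ, Y q) ω := fun ω => by
    rw [Finset.sum_apply, Finset.sum_product]
  simp_rw [hsum]
  refine (measure_ge_le_exp_cgf _ hs0.le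
    (hindep.integrable_exp_mul_sum hmeas fun q _ => hint q)).trans_eq ?_
  rw [hindep.cgf_sum hmeas fun q _ => hint q, Finset.sum_product]
  simp only [hcgf, Finset.sum_const, nsmul_eq_mul]
  congr 1
  ring

end Chernoff

section SegmentAverage

variable {Ω ι : Type*} [MeasurableSpace Ω] {μ : Measure Ω} [IsProbabilityMeasure μ] [Fintype ι]
  {Y : ℕ × ι → Ω → ℝ} {G : ℕ → Finset ℕ}

lemma ae_eventually_sum_lt (hmeas : ∀ q, Measurable (Y q)) (hindep : iIndepFun Y μ)
    (hident : ∀ t i, IdentDistrib (Y (t, i)) (Y (0, i)) μ μ)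
    (hexp : ∀ i s, Integrable (fun ω => exp (s * Y (0, i) ω)) μ)
    (hG : ∀ β > 0, Summable fun n => exp (-(β * #(G n)))) {ε : ℝ} (hε : 0 < ε) :
    ∀ᵐ ω ∂μ, ∀ᶠ n in atTop,
      ∑ t ∈ G n, ∑ i, Y (t, i) ω < (∑ i, μ[Y (0, i)] + ε) * #(G n) := by
  obtain ⟨β, hβ, hbound⟩ := exists_measureReal_sum_ge_le_exp hmeas hindep hident hexp hε
  filter_upwards [ae_eventually_notMem_of_measureReal_le (fun n => hbound (G n)) (hG β hβ)]
    with ω hω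
  exact hω.mono fun n hn => not_le.1 hn

lemma ae_tendsto_segment_average (hmeas : ∀ q, Measurable (Y q)) (hindep : iIndepFun Y μ)
    (hident : ∀ t i, IdentDistrib (Y (t, i)) (Y (0, i)) μ μ)
    (hexp : ∀ i s, Integrable (fun ω => exp (s * Y (0, i) ω)) μ)
    (hG : ∀ β > 0, Summable fun n => exp (-(β * #(G n)))) :
    ∀ᵐ ω ∂μ, Tendsto (fun n => 1 / (#(G n) : ℝ) * ∑ t ∈ G n, ∑ i, Y (t, i) ω)
      atTop (𝓝 (∑ i, μ[Y (0, i)])) := by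
  have hG_pos : ∀ᶠ n in atTop, (0 : ℝ) < #(G n) := by
    filter_upwards [(hG 1 one_pos).tendsto_atTop_zero.eventually (gt_mem_nhds one_pos)]
      with n hn
    exact Nat.cast_pos.2 (Nat.pos_of_ne_zero fun h => by simp [h] at hn)
  refine ae_tendsto_of_forall_ae_eventually_dist_lt fun ε hε => ?_
  have hupper := ae_eventually_sum_lt hmeas hindep hident hexp hG hε
  have hlower := ae_eventually_sum_lt (Y := fun q => -Y q) (fun q => (hmeas q).neg)
    (hindep.comp (fun _ => Neg.neg) fun _ => measurable_neg)
    (fun t i => (hident t i).comp measurable_neg)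
    (fun i s => by simpa [mul_neg, neg_mul] using hexp i (-s)) hG hε
  filter_upwards [hupper, hlower] with ω hup hlow
  filter_upwards [hup, hlow, hG_pos] with n hu hl hpos
  simp only [Pi.neg_apply, Finset.sum_neg_distrib, integral_neg] at hl
  rw [Real.dist_eq, abs_sub_lt_iff, one_div_mul_eq_div, sub_lt_iff_lt_add', sub_lt_comm,
    div_lt_iff₀ hpos, lt_div_iff₀ hpos]
  constructor <;> linarith

end SegmentAverage

section Poisson

lemma hasSum_mul_natCast_poissonMeasure (r : ℝ≥0) :
    HasSum (fun n : ℕ => exp (-r) * r ^ n / n.factorial * n) r := by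
  have hshift : ∀ n : ℕ, exp (-r) * r ^ (n + 1) / (n + 1).factorial * ((n + 1 : ℕ) : ℝ)
      = r * (exp (-r) * r ^ n / n.factorial) := fun n => by
    rw [Nat.factorial_succ]
    push_cast
    field_simp
    ring
  rw [← hasSum_nat_add_iff' 1]
  simp only [hshift, Finset.sum_range_one, Nat.cast_zero, mul_zero, sub_zero]
  simpa using (hasSum_one_poissonMeasure r).mul_left (r : ℝ)

lemma integrable_natCast_poissonMeasure (r : ℝ≥0) :
    Integrable (fun n : ℕ => (n : ℝ)) (poissonMeasure r) := by
  simpa [integrable_poissonMeasure_iff] using (hasSum_mul_natCast_poissonMeasure r).summable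

lemma integral_natCast_poissonMeasure (r : ℝ≥0) : ∫ n, (n : ℝ) ∂poissonMeasure r = r := by
  simpa using (hasSum_integral_poissonMeasure (integrable_natCast_poissonMeasure r)).unique
    (hasSum_mul_natCast_poissonMeasure r)

lemma integrable_exp_mul_natCast_poissonMeasure (r : ℝ≥0) (s : ℝ) :
    Integrable (fun n : ℕ => exp (s * n)) (poissonMeasure r) := by
  have hterm : ∀ n : ℕ, exp (-r) * r ^ n / n.factorial * ‖exp (s * n)‖
      = exp (-r) * ((r * exp s) ^ n / n.factorial) := fun n => by
    rw [Real.norm_of_nonneg (exp_pos _).le, mul_pow, ← exp_nat_mul]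
    ring_nf
  rw [integrable_poissonMeasure_iff]
  simpa only [hterm] using (Real.summable_pow_div_factorial (r * exp s)).mul_left (exp (-r))

variable {Ω : Type*} [MeasurableSpace Ω] {μ : Measure Ω} {N : Ω → ℕ} {r : ℝ≥0}

lemma integrable_exp_mul_affine_of_map_eq_poissonMeasure (hN : Measurable N)
    (hlaw : μ.map N = poissonMeasure r) (a b s : ℝ) :
    Integrable (fun ω => exp (s * (a * N ω + b))) μ := by
  have h : Integrable (fun n : ℕ => exp (s * (a * n + b))) (μ.map N) := by
    simpa [hlaw, mul_add, exp_add, mul_comm, mul_left_comm, mul_assoc] using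
      (integrable_exp_mul_natCast_poissonMeasure r (s * a)).const_mul (exp (s * b))
  exact (integrable_map_measure (by fun_prop) hN.aemeasurable).1 h

lemma integral_affine_of_map_eq_poissonMeasure [IsProbabilityMeasure μ] (hN : Measurable N)
    (hlaw : μ.map N = poissonMeasure r) (a b : ℝ) :
    ∫ ω, (a * N ω + b) ∂μ = a * r + b := by
  rw [← integral_map (f := fun n : ℕ => a * n + b) hN.aemeasurable (by fun_prop), hlaw,
    integral_add ((integrable_natCast_poissonMeasure r).const_mul a) (integrable_const b),
    integral_const_mul, integral_natCast_poissonMeasure]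
  simp

end Poisson

theorem ae_tendsto_segment_average_poisson {Ω P : Type*} [MeasurableSpace Ω] {μ : Measure Ω}
    [IsProbabilityMeasure μ] [Fintype P] {X : ℕ → Ω → P → ℕ} {r : P → ℝ≥0}
    (hmeas : ∀ t p, Measurable fun ω => X t ω p)
    (hindep : iIndepFun (fun (q : ℕ × P) ω => X q.1 ω q.2) μ)
    (hlaw : ∀ t p, μ.map (fun ω => X t ω p) = poissonMeasure (r p)) {G : ℕ → Finset ℕ}
    (hG : ∀ β > 0, Summable fun n => exp (-(β * #(G n)))) (a b : P → ℝ) :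
    ∀ᵐ ω ∂μ, Tendsto (fun n => 1 / (#(G n) : ℝ) * ∑ t ∈ G n, ∑ p, (a p * X t ω p + b p))
      atTop (𝓝 (∑ p, (a p * r p + b p))) := by
  have hident : ∀ t p, IdentDistrib (fun ω => X t ω p) (fun ω => X 0 ω p) μ μ := fun t p =>
    ⟨(hmeas t p).aemeasurable, (hmeas 0 p).aemeasurable, by rw [hlaw, hlaw]⟩
  have hmean : ∀ p, ∫ ω, (a p * X 0 ω p + b p) ∂μ = a p * r p + b p := fun p =>
    integral_affine_of_map_eq_poissonMeasure (hmeas 0 p) (hlaw 0 p) (a p) (b p)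
  simp only [← hmean]
  exact ae_tendsto_segment_average (Y := fun q ω => a q.2 * X q.1 ω q.2 + b q.2)
    (fun q => by fun_prop)
    (hindep.comp (fun q (n : ℕ) => a q.2 * n + b q.2) fun q => by fun_prop)
    (fun t p => (hident t p).comp (by fun_prop : Measurable fun n : ℕ => a p * n + b p))
    (fun p s => integrable_exp_mul_affine_of_map_eq_poissonMeasure (hmeas 0 p) (hlaw 0 p) _ _ s)
    hG

section Loglik

variable {NI NW m : ℕ} (R : Fin NI → Fin m) (μ : Fin m × Fin NW → ℝ)

lemma sum_sum_mul_log_sub_eq_sum (y : Fin NI × Fin NW → ℝ) :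
    ∑ w, ∑ i, (y (i, w) * log (μ (R i, w)) - μ (R i, w))
      = ∑ p : Fin NI × Fin NW, (log (μ (R p.1, p.2)) * y p + -μ (R p.1, p.2)) := by
  rw [Finset.sum_comm, Fintype.sum_prod_type]
  exact Finset.sum_congr rfl fun i _ => Finset.sum_congr rfl fun w _ => by ring

lemma sum_ite_div_sub_one_eq_sum (hw : Fin m × Fin NW) (y : Fin NI × Fin NW → ℝ) :
    ∑ i, (if R i = hw.1 then y (i, hw.2) / μ hw - 1 else 0)
      = ∑ p : Fin NI × Fin NW, ((if (R p.1, p.2) = hw then (μ hw)⁻¹ else 0) * y p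
          + if (R p.1, p.2) = hw then -1 else 0) := by
  rw [Fintype.sum_prod_type]
  refine Finset.sum_congr rfl fun i _ => ?_
  by_cases h : R i = hw.1
  · simp [Prod.ext_iff, h, div_eq_inv_mul, sub_eq_add_neg, Finset.sum_add_distrib]
  · simp [Prod.ext_iff, h]

lemma loglik_eq_sum (x : Fin NI × Fin NW → ℕ) :
    loglik R μ x = ∑ p : Fin NI × Fin NW, (log (μ (R p.1, p.2)) * x p + -μ (R p.1, p.2)) :=
  sum_sum_mul_log_sub_eq_sum R μ fun p => x p

lemma expLoglik_eq_sum {m0 : ℕ} (R0 : Fin NI → Fin m0) (μ0 : Fin m0 × Fin NW → ℝ) :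
    expLoglik R0 μ0 R μ
      = ∑ p : Fin NI × Fin NW, (log (μ (R p.1, p.2)) * μ0 (R0 p.1, p.2) + -μ (R p.1, p.2)) :=
  sum_sum_mul_log_sub_eq_sum R μ fun p => μ0 (R0 p.1, p.2)

lemma loglikGrad_apply_eq_sum (x : Fin NI × Fin NW → ℕ) (hw : Fin m × Fin NW) :
    loglikGrad R μ x hw
      = ∑ p : Fin NI × Fin NW, ((if (R p.1, p.2) = hw then (μ hw)⁻¹ else 0) * x p
          + if (R p.1, p.2) = hw then -1 else 0) :=
  sum_ite_div_sub_one_eq_sum R μ hw fun p => x p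

lemma expLoglikGrad_apply_eq_sum {m0 : ℕ} (R0 : Fin NI → Fin m0) (μ0 : Fin m0 × Fin NW → ℝ)
    (hw : Fin m × Fin NW) :
    expLoglikGrad R0 μ0 R μ hw
      = ∑ p : Fin NI × Fin NW, ((if (R p.1, p.2) = hw then (μ hw)⁻¹ else 0) * μ0 (R0 p.1, p.2)
          + if (R p.1, p.2) = hw then -1 else 0) :=
  sum_ite_div_sub_one_eq_sum R μ hw fun p => μ0 (R0 p.1, p.2)

end Loglik

theorem prop3_tail_segment_slln_general
    {NI NW m0 m : ℕ} (Cd Cu : ℝ) (hCd : 0 < Cd)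
    (R0 : Fin NI → Fin m0)
    (μ0 : Fin m0 × Fin NW → ℝ) (hA1 : ∀ p, μ0 p ∈ Set.Icc Cd Cu)
    (R : Fin NI → Fin m) (μ : Fin m × Fin NW → ℝ)
    (wexp c : ℝ) (hwexp : 0 < wexp ∧ wexp ≤ 1) (hc : 0 < c)
    (g : ℕ → ℕ) (hg_le : ∀ n, g n ≤ n)
    (hg_gt : ∀ᶠ n : ℕ in atTop, c * (n : ℝ) ^ wexp < (g n : ℝ))
    {Ω : Type*} [MeasurableSpace Ω] (Pr : Measure Ω) [IsProbabilityMeasure Pr]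
    (X : ℕ → Ω → Fin NI × Fin NW → ℕ)
    (hmeas : ∀ t p, Measurable fun ω => X t ω p)
    (hindep : iIndepFun
      (fun (q : ℕ × (Fin NI × Fin NW)) ω => X q.1 ω q.2) Pr)
    (hlaw : ∀ t p, Measure.map (fun ω => X t ω p) Pr
      = poissonMeasure (μ0 (R0 p.1, p.2)).toNNReal) :
    ∀ᵐ ω ∂Pr,
      (Tendsto (fun n : ℕ =>
          (1 / (g n : ℝ)) * ∑ t ∈ Finset.Ioc (n - g n) n, loglik R μ (X t ω))
        atTop (𝓝 (expLoglik R0 μ0 R μ))) ∧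
      (Tendsto (fun n : ℕ =>
          (1 / (g n : ℝ)) • ∑ t ∈ Finset.Ioc (n - g n) n, loglikGrad R μ (X t ω))
        atTop (𝓝 (expLoglikGrad R0 μ0 R μ))) := by
  have hr : ∀ p : Fin NI × Fin NW, ((μ0 (R0 p.1, p.2)).toNNReal : ℝ) = μ0 (R0 p.1, p.2) :=
    fun p => Real.coe_toNNReal _ (hCd.le.trans (hA1 _).1)
  have hcard : ∀ n, #(Ioc (n - g n) n) = g n := fun n => by
    rw [Nat.card_Ioc, Nat.sub_sub_self (hg_le n)]
  have hG : ∀ β > 0, Summable fun n => exp (-(β * #(Ioc (n - g n) n))) := fun β hβ => by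
    simpa only [hcard] using summable_exp_neg_mul_of_rpow_lt hc hwexp.1 hg_gt hβ
  have hlik := ae_tendsto_segment_average_poisson hmeas hindep hlaw hG
    (fun p => log (μ (R p.1, p.2))) (fun p => -μ (R p.1, p.2))
  have hgrad := ae_all_iff.2 fun hw : Fin m × Fin NW =>
    ae_tendsto_segment_average_poisson hmeas hindep hlaw hG
      (fun p => if (R p.1, p.2) = hw then (μ hw)⁻¹ else 0)
      (fun p => if (R p.1, p.2) = hw then -1 else 0)
  filter_upwards [hlik, hgrad] with ω hlikω hgradω
  simp only [hcard, hr] at hlikω hgradω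
  refine ⟨?_, tendsto_pi_nhds.2 fun hw => ?_⟩
  · simpa only [loglik_eq_sum, expLoglik_eq_sum] using hlikω
  · simpa only [Pi.smul_apply, Finset.sum_apply, smul_eq_mul, loglikGrad_apply_eq_sum,
      expLoglikGrad_apply_eq_sum] using hgradω hw

/-- Proposition 3 (strong law for tail segments): for fixed `μ ∈ Θ(R)` and a
sequence `g` with `g n ≤ n` and `g n > c·n^w` eventually (`w ∈ (0,1]`, `c > 0`),
the averages of `l((R,μ); X_t)` over the tail segment `t = n−g(n)+1, …, n`
converge almost surely to `L(R,μ)`, and likewise for the gradients in `μ`. -/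
theorem prop3_tail_segment_slln
    {NI NW m0 m : ℕ} (Cd Cu : ℝ) (hCd : 0 < Cd) (hCdCu : Cd ≤ Cu)
    (R0 : Fin NI → Fin m0) (hR0surj : ∀ h, ∃ i, R0 i = h)
    (μ0 : Fin m0 × Fin NW → ℝ) (hA1 : ∀ p, μ0 p ∈ Set.Icc Cd Cu)
    (R : Fin NI → Fin m) (μ : Fin m × Fin NW → ℝ) (hμ : μ ∈ Theta Cd Cu m NW)
    (wexp c : ℝ) (hwexp : 0 < wexp ∧ wexp ≤ 1) (hc : 0 < c)
    (g : ℕ → ℕ) (hg_le : ∀ n, g n ≤ n)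
    (hg_gt : ∀ᶠ n : ℕ in atTop, c * (n : ℝ) ^ wexp < (g n : ℝ))
    {Ω : Type*} [MeasurableSpace Ω] (Pr : Measure Ω) [IsProbabilityMeasure Pr]
    (X : ℕ → Ω → Fin NI × Fin NW → ℕ)
    (hmeas : ∀ t p, Measurable fun ω => X t ω p)
    (hindep : iIndepFun
      (fun (q : ℕ × (Fin NI × Fin NW)) ω => X q.1 ω q.2) Pr)
    (hlaw : ∀ t p, Measure.map (fun ω => X t ω p) Pr
      = poissonMeasure (μ0 (R0 p.1, p.2)).toNNReal) :
    ∀ᵐ ω ∂Pr,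
      (Tendsto (fun n : ℕ =>
          (1 / (g n : ℝ)) * ∑ t ∈ Finset.Ioc (n - g n) n, loglik R μ (X t ω))
        atTop (𝓝 (expLoglik R0 μ0 R μ))) ∧
      (Tendsto (fun n : ℕ =>
          (1 / (g n : ℝ)) • ∑ t ∈ Finset.Ioc (n - g n) n, loglikGrad R μ (X t ω))
        atTop (𝓝 (expLoglikGrad R0 μ0 R μ))) :=
  prop3_tail_segment_slln_general Cd Cu hCd R0 μ0 hA1 R μ wexp c hwexp hc g hg_le hg_gt Pr X hmeas
    hindep hlaw
end

section
/- (Lemma 2, part (prop_6.1).) Fix a segmentation R : P → Fin m and ε_ν ∈ (0,1). For each n and each admissible pair (ν_d, ν_u), let μ̂_n(ν_d, ν_u) ∈ Θ(R) be a maximizer of μ ↦ Σ_{t=⌊n·ν_d⌋+1}^{⌊n·ν_u⌋} l((R,μ); X_t) over Θ(R), and let μ* ∈ Θ(R) be a maximizer of μ ↦ L(R,μ) over Θ(R). Then almost surely, sup over all admissible pairs (ν_d, ν_u) of | (1/n)·Σ_{t=⌊n·ν_d⌋+1}^{⌊n·ν_u⌋} l((R, μ̂_n(ν_d,ν_u));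 X_t) − (ν_u − ν_d)·L(R,μ*) | → 0 as n → ∞. -/
/-!
Subtracting its expectation turns the log-likelihood summed over a window `T` of observations
into `∑ p, (∑ t ∈ T, X t p - #T * λ°(p)) * log μ (R p.1, p.2)`; on `Θ(R)` the logarithm is bounded
by `max |log C_d| |log C_u|`, so this sum is uniformly close to `#T * L(R, μ)`, and comparing the
two maximisation problems transfers the bound to their maximal values. The deviation over a window
`Ioc a b` is the difference of the deviations over `Ioc 0 b` and `Ioc 0 a`; by the strong law of
large numbers these are `o(n)` for every pixel, hence uniformly `o(n)` over all `a, b ≤ n`, which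
makes the convergence uniform in `(ν_d, ν_u)`.
-/

open MeasureTheory ProbabilityTheory Filter Topology

/-- An admissible pair of normalized endpoints: `0 ≤ ν_d < ν_u ≤ 1` with
`ν_u − ν_d > ε_ν`. -/
def AdmPair (epsnu : ℝ) : Type :=
  {q : ℝ × ℝ // 0 ≤ q.1 ∧ q.1 < q.2 ∧ q.2 ≤ 1 ∧ epsnu < q.2 - q.1}

open Finset Real
open scoped NNReal Nat

namespace ProbabilityTheory

theorem hasSum_poissonMeasure_mean (r : ℝ≥0) :
    HasSum (fun n : ℕ => Real.exp (-r) * r ^ n / n ! * n) r := by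
  have hshift : HasSum (fun n : ℕ => Real.exp (-r) * r ^ (n + 1) / (n + 1)! * ((n + 1 : ℕ) : ℝ))
      r := by
    have h := (hasSum_one_poissonMeasure r).mul_left (r : ℝ)
    rw [mul_one] at h
    refine h.congr_fun fun n => ?_
    rw [Nat.factorial_succ]
    push_cast
    field_simp
    ring
  simpa using (hasSum_nat_add_iff (f := fun n : ℕ => Real.exp (-r) * r ^ n / n ! * n) 1).mp hshift

theorem integrable_poissonMeasure_natCast (r : ℝ≥0) :
    Integrable (fun n : ℕ => (n : ℝ)) (poissonMeasure r) :=
  integrable_poissonMeasure_iff.2 <| by simpa using (hasSum_poissonMeasure_mean r).summable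

theorem integral_poissonMeasure_natCast (r : ℝ≥0) :
    ∫ n : ℕ, (n : ℝ) ∂poissonMeasure r = r := by
  simpa [integral_poissonMeasure] using (hasSum_poissonMeasure_mean r).tsum_eq

theorem ae_tendsto_sum_range_div_of_poisson {Ω : Type*} [MeasurableSpace Ω] {P : Measure Ω}
    {Y : ℕ → Ω → ℕ} {r : ℝ≥0} (hY : ∀ t, Measurable (Y t))
    (hindep : Pairwise fun s t => IndepFun (Y s) (Y t) P)
    (hlaw : ∀ t, P.map (Y t) = poissonMeasure r) :
    ∀ᵐ ω ∂P, Tendsto (fun n : ℕ => (∑ t ∈ range n, (Y t ω : ℝ)) / n) atTop (𝓝 r) := by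
  have hint : Integrable (fun ω => (Y 0 ω : ℝ)) P := by
    rw [← Function.comp_def, ← integrable_map_measure .of_discrete (hY 0).aemeasurable, hlaw 0]
    exact integrable_poissonMeasure_natCast r
  have hmean : ∫ ω, (Y 0 ω : ℝ) ∂P = r := by
    rw [← integral_poissonMeasure_natCast r, ← hlaw 0,
      integral_map (hY 0).aemeasurable .of_discrete]
  have hident : ∀ t, IdentDistrib (fun ω => (Y t ω : ℝ)) (fun ω => (Y 0 ω : ℝ)) P P := fun t =>
    IdentDistrib.comp ⟨(hY t).aemeasurable, (hY 0).aemeasurable, by rw [hlaw, hlaw]⟩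
      measurable_from_nat
  have := strong_law_ae_real (fun t ω => (Y t ω : ℝ)) hint
    (fun s t hst => (hindep hst).comp measurable_from_nat measurable_from_nat) hident
  rwa [hmean] at this

end ProbabilityTheory

theorem sum_Ioc_zero_eq_sum_range {M : Type*} [AddCommMonoid M] (f : ℕ → M) (n : ℕ) :
    ∑ t ∈ Ioc 0 n, f t = ∑ t ∈ range n, f (t + 1) := by
  induction n with
  | zero => simp
  | succ n ih => rw [sum_Ioc_succ_top n.zero_le, sum_range_succ, ih]

theorem abs_sum_Ioc_sub_mul_le (f : ℕ → ℝ) (c : ℝ) {a b : ℕ} (hab : a ≤ b) :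
    |∑ t ∈ Ioc a b, f t - (b - a) * c|
      ≤ |∑ t ∈ Ioc 0 b, f t - b * c| + |∑ t ∈ Ioc 0 a, f t - a * c| := by
  rw [← sum_Ioc_consecutive f a.zero_le hab]
  calc _ = |(∑ t ∈ Ioc 0 a, f t + ∑ t ∈ Ioc a b, f t - b * c) - (∑ t ∈ Ioc 0 a, f t - a * c)| := by
        ring_nf
    _ ≤ _ := abs_sub _ _

theorem abs_sub_le_of_maximizers {α : Type*} {F G : α → ℝ} {x y : α} {δ : ℝ}
    (hF : F y ≤ F x) (hG : G x ≤ G y) (hx : |F x - G x| ≤ δ) (hy : |F y - G y| ≤ δ) :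
    |F x - G y| ≤ δ := by
  rw [abs_le] at *
  constructor <;> linarith

theorem Nat.abs_floor_sub_floor_sub_le {x y : ℝ} (hx : 0 ≤ x) (hy : 0 ≤ y) :
    |((⌊y⌋₊ : ℝ) - ⌊x⌋₊) - (y - x)| ≤ 1 := by
  have := Nat.floor_le hx
  have := Nat.floor_le hy
  have := Nat.lt_floor_add_one x
  have := Nat.lt_floor_add_one y
  rw [abs_le]
  constructor <;> linarith

theorem exists_abs_le_mul_add_of_tendsto_div {u : ℕ → ℝ}
    (hu : Tendsto (fun k => u k / k) atTop (𝓝 0)) {ε : ℝ} (hε : 0 < ε) :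
    ∃ C, ∀ k, |u k| ≤ ε * k + C := by
  obtain ⟨K, hK⟩ := eventually_atTop.1 (hu.abs.eventually_lt_const (by simpa using hε))
  refine ⟨∑ j ∈ range (K + 1), |u j|, fun k => ?_⟩
  rcases lt_or_ge k (K + 1) with hk | hk
  · have := single_le_sum (fun j _ => abs_nonneg (u j)) (mem_range.2 hk)
    have : 0 ≤ ε * k := by positivity
    linarith
  · have hkpos : (0 : ℝ) < k := by exact_mod_cast (by omega : 0 < k)
    have := hK k (by omega)
    rw [abs_div, Nat.abs_cast, div_lt_iff₀ hkpos] at this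
    have : 0 ≤ ∑ j ∈ range (K + 1), |u j| := sum_nonneg fun j _ => abs_nonneg (u j)
    linarith

theorem tendsto_sup'_abs_div_of_tendsto_div {u : ℕ → ℝ}
    (hu : Tendsto (fun k => u k / k) atTop (𝓝 0)) :
    Tendsto (fun n : ℕ => (range (n + 1)).sup' nonempty_range_add_one (fun k => |u k|) / n)
      atTop (𝓝 0) := by
  refine tendsto_order.2 ⟨fun a ha => .of_forall fun n => ha.trans_le ?_, fun a ha => ?_⟩
  · exact div_nonneg ((abs_nonneg (u 0)).trans (le_sup' (fun k => |u k|) (mem_range.2 n.succ_pos)))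
      n.cast_nonneg
  obtain ⟨C, hC⟩ := exists_abs_le_mul_add_of_tendsto_div hu (half_pos ha)
  filter_upwards [(tendsto_const_div_atTop_nhds_zero_nat C).eventually_lt_const (half_pos ha),
    eventually_gt_atTop 0] with n hn hn0
  have hn0' : (0 : ℝ) < n := by exact_mod_cast hn0
  have hsup : (range (n + 1)).sup' nonempty_range_add_one (fun k => |u k|) ≤ a / 2 * n + C := by
    refine sup'_le _ _ fun k hk => (hC k).trans ?_
    gcongr
    exact_mod_cast mem_range_succ_iff.1 hk
  calc _ ≤ (a / 2 * n + C) / n := by gcongr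
    _ = a / 2 + C / n := by field_simp
    _ < a := by linarith

theorem tendsto_iSup_abs_of_abs_le {α ι : Type*} {l : Filter α} {F : α → ι → ℝ} {B : α → ℝ}
    (hB : Tendsto B l (𝓝 0)) (hF : ∀ᶠ n in l, ∀ i, |F n i| ≤ B n) :
    Tendsto (fun n => ⨆ i, |F n i|) l (𝓝 0) := by
  refine squeeze_zero' (.of_forall fun n => Real.iSup_nonneg fun i => abs_nonneg _)
    (hF.mono fun n hn => Real.iSup_le (fun i => (hn i).trans (le_max_left _ 0)) (le_max_right _ _))
    ?_
  simpa using hB.max (tendsto_const_nhds (x := (0 : ℝ)))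

theorem abs_log_le_max_of_mem_Icc {a b x : ℝ} (ha : 0 < a) (hx : x ∈ Set.Icc a b) :
    |log x| ≤ max |log a| |log b| :=
  abs_le_max_abs_abs (log_le_log ha hx.1) (log_le_log (ha.trans_le hx.1) hx.2)

section Likelihood

variable {NI NW m0 m : ℕ} (R0 : Fin NI → Fin m0) (μ0 : Fin m0 × Fin NW → ℝ) (R : Fin NI → Fin m)

theorem sum_loglik_sub_card_mul_expLoglik (μ : Fin m × Fin NW → ℝ) (T : Finset ℕ)
    (f : ℕ → Fin NI × Fin NW → ℕ) :
    ∑ t ∈ T, loglik R μ (f t) - #T * expLoglik R0 μ0 R μ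
      = ∑ p : Fin NI × Fin NW,
          (∑ t ∈ T, (f t p : ℝ) - #T * μ0 (R0 p.1, p.2)) * log (μ (R p.1, p.2)) := by
  simp only [loglik, expLoglik, mul_sum, Fintype.sum_prod_type_right]
  rw [sum_comm (s := T), ← sum_sub_distrib]
  refine sum_congr rfl fun w _ => ?_
  rw [sum_comm (s := T), ← sum_sub_distrib]
  refine sum_congr rfl fun i _ => ?_
  rw [sum_sub_distrib, ← sum_mul, sum_const, nsmul_eq_mul]
  ring

theorem abs_sum_loglik_sub_card_mul_expLoglik_le {Cd Cu : ℝ} (hCd : 0 < Cd)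
    {μ : Fin m × Fin NW → ℝ} (hμ : μ ∈ Theta Cd Cu m NW) (T : Finset ℕ)
    (f : ℕ → Fin NI × Fin NW → ℕ) :
    |∑ t ∈ T, loglik R μ (f t) - #T * expLoglik R0 μ0 R μ|
      ≤ max |log Cd| |log Cu|
          * ∑ p : Fin NI × Fin NW, |∑ t ∈ T, (f t p : ℝ) - #T * μ0 (R0 p.1, p.2)| := by
  rw [sum_loglik_sub_card_mul_expLoglik, mul_sum]
  refine (abs_sum_le_sum_abs _ _).trans (sum_le_sum fun p _ => ?_)
  rw [abs_mul, mul_comm]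
  gcongr
  exact abs_log_le_max_of_mem_Icc hCd (hμ _)

theorem abs_sum_loglik_sub_card_mul_expLoglik_le_of_isMax {Cd Cu : ℝ} (hCd : 0 < Cd)
    (T : Finset ℕ) (f : ℕ → Fin NI × Fin NW → ℕ) {μh μs : Fin m × Fin NW → ℝ}
    (hμh : μh ∈ Theta Cd Cu m NW)
    (hμh_max : ∀ μ ∈ Theta Cd Cu m NW, ∑ t ∈ T, loglik R μ (f t) ≤ ∑ t ∈ T, loglik R μh (f t))
    (hμs : μs ∈ Theta Cd Cu m NW)
    (hμs_max : ∀ μ ∈ Theta Cd Cu m NW, expLoglik R0 μ0 R μ ≤ expLoglik R0 μ0 R μs) :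
    |∑ t ∈ T, loglik R μh (f t) - #T * expLoglik R0 μ0 R μs|
      ≤ max |log Cd| |log Cu|
          * ∑ p : Fin NI × Fin NW, |∑ t ∈ T, (f t p : ℝ) - #T * μ0 (R0 p.1, p.2)| :=
  abs_sub_le_of_maximizers (F := fun μ => ∑ t ∈ T, loglik R μ (f t))
    (G := fun μ => #T * expLoglik R0 μ0 R μ) (hμh_max μs hμs)
    (by gcongr; exact hμs_max μh hμh)
    (abs_sum_loglik_sub_card_mul_expLoglik_le R0 μ0 R hCd hμh T f)
    (abs_sum_loglik_sub_card_mul_expLoglik_le R0 μ0 R hCd hμs T f)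

def countDeviation (f : ℕ → Fin NI × Fin NW → ℕ) (k : ℕ) : ℝ :=
  ∑ p : Fin NI × Fin NW, |∑ t ∈ Ioc 0 k, (f t p : ℝ) - k * μ0 (R0 p.1, p.2)|

theorem abs_sum_Ioc_loglik_sub_le {Cd Cu : ℝ} (hCd : 0 < Cd) (f : ℕ → Fin NI × Fin NW → ℕ)
    {a b : ℕ} (hab : a ≤ b) {μh μs : Fin m × Fin NW → ℝ} (hμh : μh ∈ Theta Cd Cu m NW)
    (hμh_max : ∀ μ ∈ Theta Cd Cu m NW,
      ∑ t ∈ Ioc a b, loglik R μ (f t) ≤ ∑ t ∈ Ioc a b, loglik R μh (f t))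
    (hμs : μs ∈ Theta Cd Cu m NW)
    (hμs_max : ∀ μ ∈ Theta Cd Cu m NW, expLoglik R0 μ0 R μ ≤ expLoglik R0 μ0 R μs) :
    |∑ t ∈ Ioc a b, loglik R μh (f t) - (b - a) * expLoglik R0 μ0 R μs|
      ≤ max |log Cd| |log Cu| * (countDeviation R0 μ0 f b + countDeviation R0 μ0 f a) := by
  have h := abs_sum_loglik_sub_card_mul_expLoglik_le_of_isMax R0 μ0 R hCd (Ioc a b) f hμh
    hμh_max hμs hμs_max
  rw [Nat.card_Ioc, Nat.cast_sub hab] at h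
  refine h.trans (mul_le_mul_of_nonneg_left ?_ ((abs_nonneg _).trans (le_max_left _ _)))
  unfold countDeviation
  rw [← sum_add_distrib]
  exact sum_le_sum fun p _ => abs_sum_Ioc_sub_mul_le _ _ hab

theorem tendsto_countDeviation_div (f : ℕ → Fin NI × Fin NW → ℕ)
    (hf : ∀ p : Fin NI × Fin NW, Tendsto (fun n : ℕ => (∑ t ∈ Ioc 0 n, (f t p : ℝ)) / n) atTop
      (𝓝 (μ0 (R0 p.1, p.2)))) :
    Tendsto (fun k : ℕ => countDeviation R0 μ0 f k / k) atTop (𝓝 0) := by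
  have h := tendsto_finsetSum univ fun p _ => ((hf p).sub_const (μ0 (R0 p.1, p.2))).abs
  simp only [sub_self, abs_zero, sum_const_zero] at h
  refine h.congr' ((eventually_ne_atTop 0).mono fun k hk => ?_)
  simp only [countDeviation]
  rw [sum_div]
  refine sum_congr rfl fun p _ => ?_
  rw [div_sub' (Nat.cast_ne_zero.2 hk), abs_div, Nat.abs_cast]

theorem tendsto_iSup_abs_sum_loglik_sub_of_tendsto_avg {Cd Cu : ℝ} (hCd : 0 < Cd) {epsnu : ℝ}
    (f : ℕ → Fin NI × Fin NW → ℕ)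
    (hf : ∀ p : Fin NI × Fin NW, Tendsto (fun n : ℕ => (∑ t ∈ Ioc 0 n, (f t p : ℝ)) / n) atTop
      (𝓝 (μ0 (R0 p.1, p.2))))
    (μh : ℕ → AdmPair epsnu → Fin m × Fin NW → ℝ) (hμh : ∀ n q, μh n q ∈ Theta Cd Cu m NW)
    (hμh_max : ∀ (n : ℕ) (q : AdmPair epsnu), ∀ μ ∈ Theta Cd Cu m NW,
      ∑ t ∈ Ioc ⌊(n : ℝ) * q.1.1⌋₊ ⌊(n : ℝ) * q.1.2⌋₊, loglik R μ (f t)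
        ≤ ∑ t ∈ Ioc ⌊(n : ℝ) * q.1.1⌋₊ ⌊(n : ℝ) * q.1.2⌋₊, loglik R (μh n q) (f t))
    {μs : Fin m × Fin NW → ℝ} (hμs : μs ∈ Theta Cd Cu m NW)
    (hμs_max : ∀ μ ∈ Theta Cd Cu m NW, expLoglik R0 μ0 R μ ≤ expLoglik R0 μ0 R μs) :
    Tendsto (fun n : ℕ => ⨆ q : AdmPair epsnu,
      |(1 / (n : ℝ)) * ∑ t ∈ Ioc ⌊(n : ℝ) * q.1.1⌋₊ ⌊(n : ℝ) * q.1.2⌋₊, loglik R (μh n q) (f t)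
        - (q.1.2 - q.1.1) * expLoglik R0 μ0 R μs|) atTop (𝓝 0) := by
  set M := max |log Cd| |log Cu|
  set Ls := expLoglik R0 μ0 R μs
  set G : ℕ → ℝ := fun n =>
    (range (n + 1)).sup' nonempty_range_add_one fun k => |countDeviation R0 μ0 f k|
  refine tendsto_iSup_abs_of_abs_le (B := fun n => 2 * M * (G n / n) + |Ls| / n) ?_ ?_
  · simpa using ((tendsto_sup'_abs_div_of_tendsto_div (tendsto_countDeviation_div R0 μ0 f hf)
      ).const_mul (2 * M)).add (tendsto_const_div_atTop_nhds_zero_nat |Ls|)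
  filter_upwards [eventually_gt_atTop 0] with n hn q
  obtain ⟨h0, hlt, h1, -⟩ := q.2
  set a := ⌊(n : ℝ) * q.1.1⌋₊
  set b := ⌊(n : ℝ) * q.1.2⌋₊
  have hn' : (0 : ℝ) < n := by exact_mod_cast hn
  have hab : a ≤ b := Nat.floor_le_floor (by gcongr)
  have hbn : b ≤ n := Nat.floor_le_of_le (by nlinarith)
  have hG : ∀ k ≤ n, countDeviation R0 μ0 f k ≤ G n := fun k hk =>
    (le_abs_self _).trans (le_sup' (fun k => |countDeviation R0 μ0 f k|) (mem_range_succ_iff.2 hk))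
  have hwin := abs_sum_Ioc_loglik_sub_le R0 μ0 R hCd f hab (hμh n q) (hμh_max n q) hμs hμs_max
  have hfloor := Nat.abs_floor_sub_floor_sub_le (x := n * q.1.1) (y := n * q.1.2)
    (by positivity) (by nlinarith)
  set S := ∑ t ∈ Ioc a b, loglik R (μh n q) (f t)
  calc _ = |(S - (b - a) * Ls) + ((b - a) - (n * q.1.2 - n * q.1.1)) * Ls| / n := by
        rw [eq_div_iff hn'.ne', ← abs_of_pos hn', ← abs_mul, abs_of_pos hn']
        congr 1
        field_simp
        ring
    _ ≤ (|S - (b - a) * Ls| + |((b : ℝ) - a) - (n * q.1.2 - n * q.1.1)| * |Ls|) / n := by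
        gcongr
        exact (abs_add_le _ _).trans_eq (by rw [abs_mul])
    _ ≤ (M * (G n + G n) + 1 * |Ls|) / n := by
        gcongr
        exact hwin.trans (by gcongr <;> exact hG _ (by omega))
    _ = 2 * M * (G n / n) + |Ls| / n := by ring

end Likelihood

theorem lemma2_prop_6_1_general
    {NI NW m0 m : ℕ} (Cd Cu : ℝ) (hCd : 0 < Cd)
    (epsnu : ℝ)
    (R0 : Fin NI → Fin m0)
    (μ0 : Fin m0 × Fin NW → ℝ) (hA1 : ∀ p, μ0 p ∈ Set.Icc Cd Cu)
    (R : Fin NI → Fin m)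
    {Ω : Type*} [MeasurableSpace Ω] (Pr : Measure Ω)
    (X : ℕ → Ω → Fin NI × Fin NW → ℕ)
    (hmeas : ∀ t p, Measurable fun ω => X t ω p)
    (hindep : iIndepFun (fun (q : ℕ × (Fin NI × Fin NW)) ω => X q.1 ω q.2) Pr)
    (hlaw : ∀ t p, Measure.map (fun ω => X t ω p) Pr
      = poissonMeasure (μ0 (R0 p.1, p.2)).toNNReal)
    -- the (random) maximizer of the partial-sum log-likelihood over Θ(R)
    (μhat : ℕ → AdmPair epsnu → Ω → (Fin m × Fin NW → ℝ))
    (hμhat_mem : ∀ n q ω, μhat n q ω ∈ Theta Cd Cu m NW)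
    (hμhat_max : ∀ (n : ℕ) (q : AdmPair epsnu) (ω : Ω),
      ∀ μ ∈ Theta Cd Cu m NW,
        ∑ t ∈ Finset.Ioc ⌊(n : ℝ) * q.1.1⌋₊ ⌊(n : ℝ) * q.1.2⌋₊, loglik R μ (X t ω)
          ≤ ∑ t ∈ Finset.Ioc ⌊(n : ℝ) * q.1.1⌋₊ ⌊(n : ℝ) * q.1.2⌋₊,
              loglik R (μhat n q ω) (X t ω))
    -- a maximizer of the expected log-likelihood over Θ(R)
    (μstar : Fin m × Fin NW → ℝ) (hμstar_mem : μstar ∈ Theta Cd Cu m NW)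
    (hμstar_max : ∀ μ ∈ Theta Cd Cu m NW,
      expLoglik R0 μ0 R μ ≤ expLoglik R0 μ0 R μstar) :
    ∀ᵐ ω ∂Pr,
      Tendsto (fun n : ℕ => ⨆ q : AdmPair epsnu,
        |(1 / (n : ℝ)) * ∑ t ∈ Finset.Ioc ⌊(n : ℝ) * q.1.1⌋₊ ⌊(n : ℝ) * q.1.2⌋₊,
            loglik R (μhat n q ω) (X t ω)
          - (q.1.2 - q.1.1) * expLoglik R0 μ0 R μstar|) atTop (𝓝 0) := by
  have hslln : ∀ p : Fin NI × Fin NW, ∀ᵐ ω ∂Pr, Tendsto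
      (fun n : ℕ => (∑ t ∈ Ioc 0 n, (X t ω p : ℝ)) / n) atTop (𝓝 (μ0 (R0 p.1, p.2))) := by
    intro p
    have hrate : ((μ0 (R0 p.1, p.2)).toNNReal : ℝ) = μ0 (R0 p.1, p.2) :=
      Real.coe_toNNReal _ (hCd.le.trans (hA1 _).1)
    have h := ae_tendsto_sum_range_div_of_poisson (Y := fun t ω => X (t + 1) ω p)
      (fun t => hmeas _ p)
      (fun s t hst => hindep.indepFun (i := (s + 1, p)) (j := (t + 1, p)) (by simpa using hst))
      (fun t => hlaw _ p)
    simpa only [sum_Ioc_zero_eq_sum_range, hrate] using h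
  filter_upwards [ae_all_iff.2 hslln] with ω hω
  exact tendsto_iSup_abs_sum_loglik_sub_of_tendsto_avg R0 μ0 R hCd (fun t => X t ω) hω
    (fun n q => μhat n q ω) (fun n q => hμhat_mem n q ω) (fun n q => hμhat_max n q ω)
    hμstar_mem hμstar_max

/-- Lemma 2, part (prop_6.1): if `μ̂_n(ν_d,ν_u)` maximizes the partial-sum
log-likelihood over `Θ(R)` and `μ*` maximizes `L(R,·)` over `Θ(R)`, then almost
surely, uniformly over all admissible pairs,
`(1/n)·Σ_{t=⌊n ν_d⌋+1}^{⌊n ν_u⌋} l((R,μ̂_n); X_t) → (ν_u − ν_d)·L(R,μ*)`. -/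
theorem lemma2_prop_6_1
    {NI NW m0 m : ℕ} (Cd Cu : ℝ) (hCd : 0 < Cd) (hCdCu : Cd ≤ Cu)
    (epsnu : ℝ) (hepsnu : 0 < epsnu ∧ epsnu < 1)
    (R0 : Fin NI → Fin m0) (hR0surj : ∀ h, ∃ i, R0 i = h)
    (μ0 : Fin m0 × Fin NW → ℝ) (hA1 : ∀ p, μ0 p ∈ Set.Icc Cd Cu)
    (R : Fin NI → Fin m)
    {Ω : Type*} [MeasurableSpace Ω] (Pr : Measure Ω) [IsProbabilityMeasure Pr]
    (X : ℕ → Ω → Fin NI × Fin NW → ℕ)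
    (hmeas : ∀ t p, Measurable fun ω => X t ω p)
    (hindep : iIndepFun (fun (q : ℕ × (Fin NI × Fin NW)) ω => X q.1 ω q.2) Pr)
    (hlaw : ∀ t p, Measure.map (fun ω => X t ω p) Pr
      = poissonMeasure (μ0 (R0 p.1, p.2)).toNNReal)
    -- the (random) maximizer of the partial-sum log-likelihood over Θ(R)
    (μhat : ℕ → AdmPair epsnu → Ω → (Fin m × Fin NW → ℝ))
    (hμhat_mem : ∀ n q ω, μhat n q ω ∈ Theta Cd Cu m NW)
    (hμhat_max : ∀ (n : ℕ) (q : AdmPair epsnu) (ω : Ω),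
      ∀ μ ∈ Theta Cd Cu m NW,
        ∑ t ∈ Finset.Ioc ⌊(n : ℝ) * q.1.1⌋₊ ⌊(n : ℝ) * q.1.2⌋₊, loglik R μ (X t ω)
          ≤ ∑ t ∈ Finset.Ioc ⌊(n : ℝ) * q.1.1⌋₊ ⌊(n : ℝ) * q.1.2⌋₊,
              loglik R (μhat n q ω) (X t ω))
    -- a maximizer of the expected log-likelihood over Θ(R)
    (μstar : Fin m × Fin NW → ℝ) (hμstar_mem : μstar ∈ Theta Cd Cu m NW)
    (hμstar_max : ∀ μ ∈ Theta Cd Cu m NW,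
      expLoglik R0 μ0 R μ ≤ expLoglik R0 μ0 R μstar) :
    ∀ᵐ ω ∂Pr,
      Tendsto (fun n : ℕ => ⨆ q : AdmPair epsnu,
        |(1 / (n : ℝ)) * ∑ t ∈ Finset.Ioc ⌊(n : ℝ) * q.1.1⌋₊ ⌊(n : ℝ) * q.1.2⌋₊,
            loglik R (μhat n q ω) (X t ω)
          - (q.1.2 - q.1.1) * expLoglik R0 μ0 R μstar|) atTop (𝓝 0) :=
  lemma2_prop_6_1_general Cd Cu hCd epsnu R0 μ0 hA1 R Pr X hmeas hindep hlaw μhat hμhat_mem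
    hμhat_max μstar hμstar_mem hμstar_max
end
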